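/- arXiv:math/0605204 — 7 statements merged into one kernel-verified Lean document; each statement's English description precedes it below -/
import Mathlib

section
/- The total energy function 2H = M1² + M2² + 2M3² + 2α(γ3M1 + γ1M3) + 2β(γ3M2 + γ2M3) + 4(βγ1 − αγ2)² − 4γ3²(α² + β²) is a first integral of Kirchhoff's equations in Sokolov's case: for all real parameters α, β, the derivative of H along the vector field X_S vanishes identically on ℝ⁶. -/
noncomputable section

/-- Kirchhoff's equations in Sokolov's case: the polynomial vector field on ℝ⁶
with coordinates (M1, M2, M3, γ1, γ2, γ3) and real parameters α, β. -/
noncomputable def XS (α β : ℝ) : ℝ × ℝ × ℝ × ℝ × ℝ × ℝ → ℝ × ℝ × ℝ × ℝ × ℝ × ℝ :=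
  fun (M1, M2, M3, g1, g2, g3) =>
    (M2 * M3 + α * (g2 * M1 + g1 * M2) + 2 * β * (g2 * M2 - g3 * M3)
        - 4 * g2 * g3 * (2 * α ^ 2 + β ^ 2) + 4 * α * β * g1 * g3,
     4 * g1 * g3 * (α ^ 2 + 2 * β ^ 2) - β * (g2 * M1 + g1 * M2) - M1 * M3
        - 2 * α * (g1 * M1 - g3 * M3) - 4 * α * β * g2 * g3,
     4 * g1 * g2 * (α ^ 2 - β ^ 2) + β * (g3 * M1 + g1 * M3) - α * (g3 * M2 + g2 * M3)
        - 4 * α * β * (g1 ^ 2 - g2 ^ 2),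
     g2 * (2 * M3 + α * g1) + β * (g2 ^ 2 - g3 ^ 2) - g3 * M2,
     -g1 * (2 * M3 + β * g2) - α * (g1 ^ 2 - g3 ^ 2) + g3 * M1,
     g1 * (M2 + β * g3) - g2 * (M1 + α * g3))

/-- The total energy: 2H = M1² + M2² + 2M3² + 2α(γ3M1 + γ1M3) + 2β(γ3M2 + γ2M3)
+ 4(βγ1 − αγ2)² − 4γ3²(α² + β²). -/
noncomputable def HS (α β : ℝ) : ℝ × ℝ × ℝ × ℝ × ℝ × ℝ → ℝ :=
  fun (M1, M2, M3, g1, g2, g3) =>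
    (1 / 2) * (M1 ^ 2 + M2 ^ 2 + 2 * M3 ^ 2 + 2 * α * (g3 * M1 + g1 * M3)
      + 2 * β * (g3 * M2 + g2 * M3) + 4 * (β * g1 - α * g2) ^ 2
      - 4 * g3 ^ 2 * (α ^ 2 + β ^ 2))

/-- The total energy is a first integral of Kirchhoff's equations in Sokolov's case:
for all real parameters α, β, the derivative of H along the vector field X_S vanishes
identically on ℝ⁶. -/
theorem energy_first_integral_sokolov (α β : ℝ) (p : ℝ × ℝ × ℝ × ℝ × ℝ × ℝ) :
    fderiv ℝ (HS α β) p (XS α β p) = 0 := by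
  have h1 : HasFDerivAt (fun q : ℝ × ℝ × ℝ × ℝ × ℝ × ℝ => q.1)
      (ContinuousLinearMap.fst ℝ ℝ (ℝ × ℝ × ℝ × ℝ × ℝ)) p := hasFDerivAt_fst
  have h2' : HasFDerivAt (fun q : ℝ × ℝ × ℝ × ℝ × ℝ × ℝ => q.2)
      (ContinuousLinearMap.snd ℝ ℝ (ℝ × ℝ × ℝ × ℝ × ℝ)) p := hasFDerivAt_snd
  have h2 := h2'.fst
  have h3 := h2'.snd.fst
  have h4 := h2'.snd.snd.fst
  have h5 := h2'.snd.snd.snd.fst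
  have h6 := h2'.snd.snd.snd.snd
  have hHS : HS α β = (fun q : ℝ × ℝ × ℝ × ℝ × ℝ × ℝ =>
      (1 / 2) * (q.1 * q.1 + q.2.1 * q.2.1 + 2 * (q.2.2.1 * q.2.2.1)
        + 2 * α * (q.2.2.2.2.2 * q.1 + q.2.2.2.1 * q.2.2.1)
        + 2 * β * (q.2.2.2.2.2 * q.2.1 + q.2.2.2.2.1 * q.2.2.1)
        + 4 * ((β * q.2.2.2.1 - α * q.2.2.2.2.1) * (β * q.2.2.2.1 - α * q.2.2.2.2.1))
        - 4 * (q.2.2.2.2.2 * q.2.2.2.2.2) * (α ^ 2 + β ^ 2))) := by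
    funext q
    obtain ⟨a, b, c, d, e, f⟩ := q
    simp only [HS]
    ring
  have H := ((((((h1.mul h1).add (h2.mul h2)).add ((h3.mul h3).const_mul 2)).add
      (((h6.mul h1).add (h4.mul h3)).const_mul (2*α))).add
      (((h6.mul h2).add (h5.mul h3)).const_mul (2*β))).add
      ((((h4.const_mul β).sub (h5.const_mul α)).mul
        ((h4.const_mul β).sub (h5.const_mul α))).const_mul 4)).sub
      (((h6.mul h6).const_mul 4).mul_const (α^2 + β^2)) |>.const_mul (1/2)
  erw [hHS, H.fderiv]
  obtain ⟨M1, M2, M3, g1, g2, g3⟩ := p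
  simp [XS, ContinuousLinearMap.smul_apply, ContinuousLinearMap.add_apply,
    ContinuousLinearMap.sub_apply, ContinuousLinearMap.comp_apply]
  ring
end
end

section
/- The function V1 = γ1M1 + γ2M2 + γ3M3 is a first integral of Kirchhoff's equations in Sokolov's case: for all real parameters α, β, the derivative of V1 along the vector field X_S vanishes identically on ℝ⁶. -/
noncomputable section

/-- V1 = γ1 M1 + γ2 M2 + γ3 M3. -/
noncomputable def V1S : ℝ × ℝ × ℝ × ℝ × ℝ × ℝ → ℝ :=
  fun (M1, M2, M3, g1, g2, g3) => g1 * M1 + g2 * M2 + g3 * M3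

/-- V1 = γ1M1 + γ2M2 + γ3M3 is a first integral of Kirchhoff's equations in
Sokolov's case: for all real parameters α, β, the derivative of V1 along the
vector field X_S vanishes identically on ℝ⁶. -/
theorem V1_first_integral_sokolov (α β : ℝ) (p : ℝ × ℝ × ℝ × ℝ × ℝ × ℝ) :
    fderiv ℝ V1S p (XS α β p) = 0 := by
  obtain ⟨M1, M2, M3, g1, g2, g3⟩ := p
  have h1 : HasFDerivAt (fun q : ℝ × ℝ × ℝ × ℝ × ℝ × ℝ => q.1)
      (ContinuousLinearMap.fst ℝ ℝ _) (M1, M2, M3, g1, g2, g3) := hasFDerivAt_fst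
  have h2 : HasFDerivAt (fun q : ℝ × ℝ × ℝ × ℝ × ℝ × ℝ => q.2.1)
      ((ContinuousLinearMap.fst ℝ ℝ _).comp (ContinuousLinearMap.snd ℝ ℝ _))
      (M1, M2, M3, g1, g2, g3) := hasFDerivAt_fst.comp _ hasFDerivAt_snd
  have h3 : HasFDerivAt (fun q : ℝ × ℝ × ℝ × ℝ × ℝ × ℝ => q.2.2.1)
      (((ContinuousLinearMap.fst ℝ ℝ _).comp (ContinuousLinearMap.snd ℝ ℝ _)).comp
        (ContinuousLinearMap.snd ℝ ℝ _)) (M1, M2, M3, g1, g2, g3) :=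
    (hasFDerivAt_fst.comp _ hasFDerivAt_snd).comp _ hasFDerivAt_snd
  have h4 : HasFDerivAt (fun q : ℝ × ℝ × ℝ × ℝ × ℝ × ℝ => q.2.2.2.1)
      ((((ContinuousLinearMap.fst ℝ ℝ _).comp (ContinuousLinearMap.snd ℝ ℝ _)).comp
        (ContinuousLinearMap.snd ℝ ℝ _)).comp (ContinuousLinearMap.snd ℝ ℝ _))
      (M1, M2, M3, g1, g2, g3) :=
    ((hasFDerivAt_fst.comp _ hasFDerivAt_snd).comp _ hasFDerivAt_snd).comp _ hasFDerivAt_snd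
  have h5 : HasFDerivAt (fun q : ℝ × ℝ × ℝ × ℝ × ℝ × ℝ => q.2.2.2.2.1)
      (((((ContinuousLinearMap.fst ℝ ℝ _).comp (ContinuousLinearMap.snd ℝ ℝ _)).comp
        (ContinuousLinearMap.snd ℝ ℝ _)).comp (ContinuousLinearMap.snd ℝ ℝ _)).comp
        (ContinuousLinearMap.snd ℝ ℝ _)) (M1, M2, M3, g1, g2, g3) :=
    (((hasFDerivAt_fst.comp _ hasFDerivAt_snd).comp _ hasFDerivAt_snd).comp _
      hasFDerivAt_snd).comp _ hasFDerivAt_snd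
  have h6 : HasFDerivAt (fun q : ℝ × ℝ × ℝ × ℝ × ℝ × ℝ => q.2.2.2.2.2)
      (((((ContinuousLinearMap.snd ℝ ℝ _).comp (ContinuousLinearMap.snd ℝ ℝ _)).comp
        (ContinuousLinearMap.snd ℝ ℝ _)).comp (ContinuousLinearMap.snd ℝ ℝ _)).comp
        (ContinuousLinearMap.snd ℝ ℝ _)) (M1, M2, M3, g1, g2, g3) :=
    (((hasFDerivAt_snd.comp _ hasFDerivAt_snd).comp _ hasFDerivAt_snd).comp _
      hasFDerivAt_snd).comp _ hasFDerivAt_snd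
  have hV : HasFDerivAt V1S _ (M1, M2, M3, g1, g2, g3) :=
    ((h4.mul h1).add (h5.mul h2)).add (h6.mul h3)
  rw [hV.fderiv]
  simp only [XS, ContinuousLinearMap.add_apply, ContinuousLinearMap.smul_apply,
    ContinuousLinearMap.coe_comp', Function.comp_apply, ContinuousLinearMap.coe_fst',
    ContinuousLinearMap.coe_snd', smul_eq_mul]
  ring
end
end

section
/- The quartic function V3 = {3(βγ1 − αγ2)(βM1 − αM2) + (2αγ1 + 2βγ2 + M3)((α² + β²)γ3 + αM1 + βM2)}² + (M3 − αγ1 − βγ2)²{(βM1 − αM2)² + (α² + β²)(2αγ1 + 2βγ2 + M3)²} is a first integral of Kirchhoff's equations in Sokolov's case: for all real parameters α, β, the derivative of V3 along the vector field X_S vanishes identically on ℝ⁶. -/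
noncomputable section

/-- The quartic integral V3. -/
noncomputable def V3S (α β : ℝ) : ℝ × ℝ × ℝ × ℝ × ℝ × ℝ → ℝ :=
  fun (M1, M2, M3, g1, g2, g3) =>
    (3 * (β * g1 - α * g2) * (β * M1 - α * M2)
      + (2 * α * g1 + 2 * β * g2 + M3) * ((α ^ 2 + β ^ 2) * g3 + α * M1 + β * M2)) ^ 2
    + (M3 - α * g1 - β * g2) ^ 2 * ((β * M1 - α * M2) ^ 2
      + (α ^ 2 + β ^ 2) * (2 * α * g1 + 2 * β * g2 + M3) ^ 2)

/-- The quartic function V3 is a first integral of Kirchhoff's equations in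
Sokolov's case: for all real parameters α, β, the derivative of V3 along the
vector field X_S vanishes identically on ℝ⁶. -/
theorem V3_first_integral_sokolov (α β : ℝ) (p : ℝ × ℝ × ℝ × ℝ × ℝ × ℝ) :
    fderiv ℝ (V3S α β) p (XS α β p) = 0 := by
  obtain ⟨M1, M2, M3, g1, g2, g3⟩ := p
  set v1 : ℝ := M2 * M3 + α * (g2 * M1 + g1 * M2) + 2 * β * (g2 * M2 - g3 * M3)
        - 4 * g2 * g3 * (2 * α ^ 2 + β ^ 2) + 4 * α * β * g1 * g3 with hv1
  set v2 : ℝ := 4 * g1 * g3 * (α ^ 2 + 2 * β ^ 2) - β * (g2 * M1 + g1 * M2) - M1 * M3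
        - 2 * α * (g1 * M1 - g3 * M3) - 4 * α * β * g2 * g3 with hv2
  set v3 : ℝ := 4 * g1 * g2 * (α ^ 2 - β ^ 2) + β * (g3 * M1 + g1 * M3)
        - α * (g3 * M2 + g2 * M3) - 4 * α * β * (g1 ^ 2 - g2 ^ 2) with hv3
  set v4 : ℝ := g2 * (2 * M3 + α * g1) + β * (g2 ^ 2 - g3 ^ 2) - g3 * M2 with hv4
  set v5 : ℝ := -g1 * (2 * M3 + β * g2) - α * (g1 ^ 2 - g3 ^ 2) + g3 * M1 with hv5
  set v6 : ℝ := g1 * (M2 + β * g3) - g2 * (M1 + α * g3) with hv6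
  have hXS : XS α β (M1, M2, M3, g1, g2, g3) = (v1, v2, v3, v4, v5, v6) := rfl
  have hVeq : V3S α β = fun q : ℝ × ℝ × ℝ × ℝ × ℝ × ℝ =>
      (3 * (β * q.2.2.2.1 - α * q.2.2.2.2.1) * (β * q.1 - α * q.2.1)
        + (2 * α * q.2.2.2.1 + 2 * β * q.2.2.2.2.1 + q.2.2.1)
          * ((α ^ 2 + β ^ 2) * q.2.2.2.2.2 + α * q.1 + β * q.2.1)) ^ 2
      + (q.2.2.1 - α * q.2.2.2.1 - β * q.2.2.2.2.1) ^ 2 * ((β * q.1 - α * q.2.1) ^ 2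
        + (α ^ 2 + β ^ 2) * (2 * α * q.2.2.2.1 + 2 * β * q.2.2.2.2.1 + q.2.2.1) ^ 2) := by
    funext q
    obtain ⟨a, b, c, d, e, f⟩ := q
    rfl
  have hdiff : DifferentiableAt ℝ (V3S α β) (M1, M2, M3, g1, g2, g3) := by
    rw [hVeq]; fun_prop
  have h0 : ((M1, M2, M3, g1, g2, g3) : ℝ × ℝ × ℝ × ℝ × ℝ × ℝ)
      + (0 : ℝ) • ((v1, v2, v3, v4, v5, v6) : ℝ × ℝ × ℝ × ℝ × ℝ × ℝ)
      = (M1, M2, M3, g1, g2, g3) := by simp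
  have hline : HasDerivAt (fun t : ℝ => ((M1, M2, M3, g1, g2, g3) : ℝ × ℝ × ℝ × ℝ × ℝ × ℝ)
      + t • ((v1, v2, v3, v4, v5, v6) : ℝ × ℝ × ℝ × ℝ × ℝ × ℝ))
      ((v1, v2, v3, v4, v5, v6) : ℝ × ℝ × ℝ × ℝ × ℝ × ℝ) 0 := by
    simpa using ((hasDerivAt_id (0 : ℝ)).smul_const
      ((v1, v2, v3, v4, v5, v6) : ℝ × ℝ × ℝ × ℝ × ℝ × ℝ)).const_add
      ((M1, M2, M3, g1, g2, g3) : ℝ × ℝ × ℝ × ℝ × ℝ × ℝ)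
  have hcomp : HasDerivAt (fun t : ℝ => V3S α β (((M1, M2, M3, g1, g2, g3) : ℝ × ℝ × ℝ × ℝ × ℝ × ℝ)
      + t • ((v1, v2, v3, v4, v5, v6) : ℝ × ℝ × ℝ × ℝ × ℝ × ℝ)))
      (fderiv ℝ (V3S α β) (M1, M2, M3, g1, g2, g3) (v1, v2, v3, v4, v5, v6)) 0 := by
    have hf := hdiff.hasFDerivAt
    nth_rewrite 2 [← h0] at hf
    exact hf.comp_hasDerivAt 0 hline
  have hfun : (fun t : ℝ => V3S α β (((M1, M2, M3, g1, g2, g3) : ℝ × ℝ × ℝ × ℝ × ℝ × ℝ)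
      + t • ((v1, v2, v3, v4, v5, v6) : ℝ × ℝ × ℝ × ℝ × ℝ × ℝ)))
      = fun t : ℝ =>
      (3 * (β * (g1 + t * v4) - α * (g2 + t * v5)) * (β * (M1 + t * v1) - α * (M2 + t * v2))
        + (2 * α * (g1 + t * v4) + 2 * β * (g2 + t * v5) + (M3 + t * v3))
          * ((α ^ 2 + β ^ 2) * (g3 + t * v6) + α * (M1 + t * v1) + β * (M2 + t * v2))) ^ 2
      + ((M3 + t * v3) - α * (g1 + t * v4) - β * (g2 + t * v5)) ^ 2
        * ((β * (M1 + t * v1) - α * (M2 + t * v2)) ^ 2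
        + (α ^ 2 + β ^ 2) * (2 * α * (g1 + t * v4) + 2 * β * (g2 + t * v5) + (M3 + t * v3)) ^ 2) := by
    funext t
    simp only [Prod.smul_mk, smul_eq_mul, Prod.mk_add_mk]
    rfl
  rw [hfun] at hcomp
  have hm1 : HasDerivAt (fun t : ℝ => M1 + t * v1) v1 0 := (hasDerivAt_mul_const v1).const_add M1
  have hm2 : HasDerivAt (fun t : ℝ => M2 + t * v2) v2 0 := (hasDerivAt_mul_const v2).const_add M2
  have hm3 : HasDerivAt (fun t : ℝ => M3 + t * v3) v3 0 := (hasDerivAt_mul_const v3).const_add M3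
  have hg1 : HasDerivAt (fun t : ℝ => g1 + t * v4) v4 0 := (hasDerivAt_mul_const v4).const_add g1
  have hg2 : HasDerivAt (fun t : ℝ => g2 + t * v5) v5 0 := (hasDerivAt_mul_const v5).const_add g2
  have hg3 : HasDerivAt (fun t : ℝ => g3 + t * v6) v6 0 := (hasDerivAt_mul_const v6).const_add g3
  have hP := (hm1.const_mul β).sub (hm2.const_mul α)
  have hR := (hg1.const_mul β).sub (hg2.const_mul α)
  have hQ := ((hg1.const_mul (2 * α)).add (hg2.const_mul (2 * β))).add hm3
  have hS := (((hg3.const_mul (α ^ 2 + β ^ 2)).add (hm1.const_mul α)).add (hm2.const_mul β))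
  have hB := (hm3.sub (hg1.const_mul α)).sub (hg2.const_mul β)
  have hA := ((hR.const_mul 3).mul hP).add (hQ.mul hS)
  have hC := (hP.pow 2).add ((hQ.pow 2).const_mul (α ^ 2 + β ^ 2))
  have hF := (hA.pow 2).add ((hB.pow 2).mul hC)
  have key := hcomp.unique hF
  rw [hXS, key, hv1, hv2, hv3, hv4, hv5, hv6]
  simp only [Pi.add_apply, Pi.sub_apply, Pi.mul_apply, Pi.pow_apply]
  ring
end
end

section
/- The invariant manifold {r1 = r2 = r3 = 0} of the transformed system is stable: along every solution t ↦ (s(t), r(t)) of the transformed system, the quantity r1(t)² + r2(t)² + r3(t)² is constant in t; consequently, for every ε > 0, any solution whose initial distance to the set {r = 0} (i.e., √(r1(0)² + r2(0)² + r3(0)²)) is less than ε stays at distance less than ε from {r = 0} for all time in its interval of existence. -/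
/-- The invariant manifold {r1 = r2 = r3 = 0} of the transformed system is stable:
along every solution of the transformed system, r1² + r2² + r3² is constant;
consequently, for every ε > 0, any solution whose distance √(r1² + r2² + r3²) to the
set {r = 0} is less than ε at some time stays at distance less than ε for all time
in its interval of existence. -/
theorem r_zero_manifold_stable (α : ℝ) (I : Set ℝ) (hI : I.OrdConnected)
    (s1 s2 s3 r1 r2 r3 : ℝ → ℝ)
    (hs1 : ∀ t ∈ I, HasDerivAt s1 ((α * r1 t + s3 t) * s2 t - α ^ 2 * r2 t * r3 t) t)
    (hs2 : ∀ t ∈ I, HasDerivAt s2 ((α * r3 t - s1 t) * (α * r1 t + s3 t)) t)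
    (hs3 : ∀ t ∈ I, HasDerivAt s3 (-(α * r2 t * s3 t)) t)
    (hr1 : ∀ t ∈ I, HasDerivAt r1 ((α * r1 t + 2 * s3 t) * r2 t - r3 t * s2 t) t)
    (hr2 : ∀ t ∈ I, HasDerivAt r2 (r3 t * s1 t - r1 t * (α * r1 t + 2 * s3 t)) t)
    (hr3 : ∀ t ∈ I, HasDerivAt r3 (r1 t * s2 t - r2 t * s1 t) t) :
    (∀ t ∈ I, ∀ t' ∈ I,
      r1 t ^ 2 + r2 t ^ 2 + r3 t ^ 2 = r1 t' ^ 2 + r2 t' ^ 2 + r3 t' ^ 2) ∧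
    (∀ ε > (0 : ℝ), ∀ t0 ∈ I,
      Real.sqrt (r1 t0 ^ 2 + r2 t0 ^ 2 + r3 t0 ^ 2) < ε →
      ∀ t ∈ I, Real.sqrt (r1 t ^ 2 + r2 t ^ 2 + r3 t ^ 2) < ε) := by
  set Q : ℝ → ℝ := fun t => r1 t ^ 2 + r2 t ^ 2 + r3 t ^ 2 with hQ
  have hQd : ∀ t ∈ I, HasDerivAt Q 0 t := by
    intro t ht
    have h := (((hr1 t ht).pow 2).add ((hr2 t ht).pow 2)).add ((hr3 t ht).pow 2)
    refine h.congr_deriv ?_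
    norm_num
    ring
  have key : ∀ t ∈ I, ∀ t' ∈ I, Q t = Q t' := by
    intro t ht t' ht'
    rcases le_total t t' with h | h
    · have hsub : Set.Icc t t' ⊆ I := hI.out ht ht'
      have := constant_of_has_deriv_right_zero (f := Q) (a := t) (b := t')
        (fun x hx => ((hQd x (hsub hx)).continuousAt).continuousWithinAt)
        (fun x hx => ((hQd x (hsub ⟨hx.1, hx.2.le⟩)).hasDerivWithinAt))
      exact (this t' ⟨h, le_rfl⟩).symm
    · have hsub : Set.Icc t' t ⊆ I := hI.out ht' ht
      have := constant_of_has_deriv_right_zero (f := Q) (a := t') (b := t)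
        (fun x hx => ((hQd x (hsub hx)).continuousAt).continuousWithinAt)
        (fun x hx => ((hQd x (hsub ⟨hx.1, hx.2.le⟩)).hasDerivWithinAt))
      exact this t ⟨h, le_rfl⟩
  refine ⟨key, ?_⟩
  intro ε hε t0 ht0 h0 t ht
  have := key t ht t0 ht0
  simp only [hQ] at this
  rw [this]
  exact h0
end

section
/- Let α, λ0, λ1, λ3 be real numbers with α ≠ 0, λ0 ≠ 0, λ3 ≠ 0 and λ0/λ3 > 0, and set μ = 2λ0/(λ1 + √(4α²λ0² + λ1²)) (the denominator is nonzero since αλ0 ≠ 0). Then the set M₁ = {(s1,s2,s3,r1,r2,r3) ∈ ℝ⁶ : s3 = 0, r3 = 0, r1 = μ s1, r2 = μ s2, s1² + s2² = λ0/λ3} is an invariant manifold of the transformed system: every solution of the transformed system whose value at some time lies in M₁ remains in M₁ for all time in its interval of existence. -/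
open Set Real

private lemma gron_zero_right {E : Type*} [NormedAddCommGroup E] [NormedSpace ℝ E]
    {w w' : ℝ → E} {a b K : ℝ}
    (hd : ∀ t ∈ Icc a b, HasDerivAt w (w' t) t)
    (hb : ∀ t ∈ Icc a b, ‖w' t‖ ≤ K * ‖w t‖)
    (h0 : w a = 0) : ∀ t ∈ Icc a b, w t = 0 := by
  intro t ht
  have hcont : ContinuousOn w (Icc a b) := fun x hx =>
    (hd x hx).continuousAt.continuousWithinAt
  have key := norm_le_gronwallBound_of_norm_deriv_right_le (δ := 0) (K := K) (ε := 0)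
    hcont (fun x hx => (hd x (Ico_subset_Icc_self hx)).hasDerivWithinAt)
    (by simp [h0]) (fun x hx => by simpa using hb x (Ico_subset_Icc_self hx)) t ht
  rw [gronwallBound_ε0_δ0] at key
  simpa using le_antisymm key (norm_nonneg _)

private lemma gron_zero_left {E : Type*} [NormedAddCommGroup E] [NormedSpace ℝ E]
    {w w' : ℝ → E} {a b K : ℝ}
    (hd : ∀ t ∈ Icc a b, HasDerivAt w (w' t) t)
    (hb : ∀ t ∈ Icc a b, ‖w' t‖ ≤ K * ‖w t‖)
    (h0 : w b = 0) : ∀ t ∈ Icc a b, w t = 0 := by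
  intro t ht
  have hmem : ∀ τ ∈ Icc a b, a + b - τ ∈ Icc a b := by
    intro τ hτ
    exact ⟨by linarith [hτ.2], by linarith [hτ.1]⟩
  have hd' : ∀ τ ∈ Icc a b, HasDerivAt (fun τ => w (a + b - τ)) (-(w' (a + b - τ))) τ := by
    intro τ hτ
    have hin : HasDerivAt (fun τ : ℝ => a + b - τ) (-1) τ := by
      simpa using (hasDerivAt_id τ).const_sub (a + b)
    have := (hd _ (hmem τ hτ)).scomp τ hin
    simpa [Function.comp_def] using this
  have key := gron_zero_right (w := fun τ => w (a + b - τ)) (w' := fun τ => -(w' (a + b - τ)))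
    (a := a) (b := b) (K := K) hd'
    (fun τ hτ => by simpa using hb _ (hmem τ hτ)) (by simpa using h0)
  have := key (a + b - t) (hmem t ht)
  simpa using this

private lemma mul2_abs_le {x y X Y : ℝ} (hx : |x| ≤ X) (hy : |y| ≤ Y) : |x * y| ≤ X * Y := by
  have hX : 0 ≤ X := (abs_nonneg x).trans hx
  rw [abs_mul]
  exact mul_le_mul hx hy (abs_nonneg y) hX

private lemma mul3_abs_le {x y z X Y Z : ℝ} (hx : |x| ≤ X) (hy : |y| ≤ Y) (hz : |z| ≤ Z) :
    |x * y * z| ≤ X * Y * Z :=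
  mul2_abs_le (mul2_abs_le hx hy) hz

private lemma abs_sub_le' (a b : ℝ) : |a - b| ≤ |a| + |b| := by
  simpa [sub_eq_add_neg] using abs_add_le a (-b)

private lemma quint_norm_le {a b c d e c0 : ℝ} (h1 : |a| ≤ c0) (h2 : |b| ≤ c0) (h3 : |c| ≤ c0)
    (h4 : |d| ≤ c0) (h5 : |e| ≤ c0) : ‖((a, b, c, d, e) : ℝ × ℝ × ℝ × ℝ × ℝ)‖ ≤ c0 := by
  simp only [Prod.norm_def, Real.norm_eq_abs, sup_le_iff]
  exact ⟨h1, h2, h3, h4, h5⟩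

private lemma quint_comp_le (a b c d e : ℝ) :
    |a| ≤ ‖((a, b, c, d, e) : ℝ × ℝ × ℝ × ℝ × ℝ)‖ ∧
    |b| ≤ ‖((a, b, c, d, e) : ℝ × ℝ × ℝ × ℝ × ℝ)‖ ∧
    |c| ≤ ‖((a, b, c, d, e) : ℝ × ℝ × ℝ × ℝ × ℝ)‖ ∧
    |d| ≤ ‖((a, b, c, d, e) : ℝ × ℝ × ℝ × ℝ × ℝ)‖ ∧
    |e| ≤ ‖((a, b, c, d, e) : ℝ × ℝ × ℝ × ℝ × ℝ)‖ := by
  simp only [Prod.norm_def, Real.norm_eq_abs]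
  refine ⟨le_sup_left, ?_, ?_, ?_, ?_⟩
  · exact le_sup_of_le_right le_sup_left
  · exact le_sup_of_le_right (le_sup_of_le_right le_sup_left)
  · exact le_sup_of_le_right (le_sup_of_le_right (le_sup_of_le_right le_sup_left))
  · exact le_sup_of_le_right (le_sup_of_le_right (le_sup_of_le_right le_sup_right))

/-- For α ≠ 0, λ0 ≠ 0, λ3 ≠ 0 with λ0/λ3 > 0 and μ = 2λ0/(λ1 + √(4α²λ0² + λ1²)),
the set M₁ = {s3 = 0, r3 = 0, r1 = μ s1, r2 = μ s2, s1² + s2² = λ0/λ3} is an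
invariant manifold of the transformed system: every solution whose value at some
time lies in M₁ remains in M₁ for all time in its interval of existence. -/
theorem M1_invariant_manifold (α lam0 lam1 lam3 : ℝ)
    (hα : α ≠ 0) (h0 : lam0 ≠ 0) (h3 : lam3 ≠ 0) (hpos : 0 < lam0 / lam3)
    (μ : ℝ) (hμ : μ = 2 * lam0 / (lam1 + Real.sqrt (4 * α ^ 2 * lam0 ^ 2 + lam1 ^ 2)))
    (I : Set ℝ) (hI : I.OrdConnected)
    (s1 s2 s3 r1 r2 r3 : ℝ → ℝ)
    (hs1 : ∀ t ∈ I, HasDerivAt s1 ((α * r1 t + s3 t) * s2 t - α ^ 2 * r2 t * r3 t) t)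
    (hs2 : ∀ t ∈ I, HasDerivAt s2 ((α * r3 t - s1 t) * (α * r1 t + s3 t)) t)
    (hs3 : ∀ t ∈ I, HasDerivAt s3 (-(α * r2 t * s3 t)) t)
    (hr1 : ∀ t ∈ I, HasDerivAt r1 ((α * r1 t + 2 * s3 t) * r2 t - r3 t * s2 t) t)
    (hr2 : ∀ t ∈ I, HasDerivAt r2 (r3 t * s1 t - r1 t * (α * r1 t + 2 * s3 t)) t)
    (hr3 : ∀ t ∈ I, HasDerivAt r3 (r1 t * s2 t - r2 t * s1 t) t)
    (t0 : ℝ) (ht0 : t0 ∈ I)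
    (hmem : s3 t0 = 0 ∧ r3 t0 = 0 ∧ r1 t0 = μ * s1 t0 ∧ r2 t0 = μ * s2 t0 ∧
      s1 t0 ^ 2 + s2 t0 ^ 2 = lam0 / lam3) :
    ∀ t ∈ I, s3 t = 0 ∧ r3 t = 0 ∧ r1 t = μ * s1 t ∧ r2 t = μ * s2 t ∧
      s1 t ^ 2 + s2 t ^ 2 = lam0 / lam3 := by
  obtain ⟨hm1, hm2, hm3, hm4, hm5⟩ := hmem
  intro t ht
  have hJI : uIcc t0 t ⊆ I := hI.uIcc_subset ht0 ht
  have cs1 : ContinuousOn s1 (uIcc t0 t) :=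
    fun x hx => (hs1 x (hJI hx)).continuousAt.continuousWithinAt
  have cs2 : ContinuousOn s2 (uIcc t0 t) :=
    fun x hx => (hs2 x (hJI hx)).continuousAt.continuousWithinAt
  have cs3 : ContinuousOn s3 (uIcc t0 t) :=
    fun x hx => (hs3 x (hJI hx)).continuousAt.continuousWithinAt
  have cr1 : ContinuousOn r1 (uIcc t0 t) :=
    fun x hx => (hr1 x (hJI hx)).continuousAt.continuousWithinAt
  have cr2 : ContinuousOn r2 (uIcc t0 t) :=
    fun x hx => (hr2 x (hJI hx)).continuousAt.continuousWithinAt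
  have cB : ContinuousOn
      (fun τ => |s1 τ| + |s2 τ| + |r1 τ| + |r2 τ| + |s3 τ| + |r2 τ - μ * s2 τ|) (uIcc t0 t) :=
    ((((cs1.abs.add cs2.abs).add cr1.abs).add cr2.abs).add cs3.abs).add
      ((cr2.sub (continuousOn_const.mul cs2)).abs)
  obtain ⟨M, hM⟩ := isCompact_uIcc.exists_bound_of_continuousOn cB
  set K : ℝ := |α| * |M| + (|M| + |M|)
    + (|μ| * |M| + 2 * |M| + (|μ| * |α| ^ 2 * |M| + |M|) + |α| * |M|)
    + ((|M| + |μ| * |α| ^ 2 * |M|) + |μ| * |α| * |M| + (|μ| * |M| + 2 * |M|) + |α| * |M|)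
    + 2 * |α| * ((|α| * |M| + |M|) * |M| + |α| * |M| * |M|) + 1 with hK
  have hd : ∀ τ ∈ uIcc t0 t, HasDerivAt (fun τ => ((s3 τ, r3 τ, r1 τ - μ * s1 τ, r2 τ - μ * s2 τ, s1 τ ^ 2 + s2 τ ^ 2 - lam0 / lam3) : ℝ × ℝ × ℝ × ℝ × ℝ)) ((fun τ => ((-(α * r2 τ * s3 τ), (r1 τ - μ * s1 τ) * s2 τ - (r2 τ - μ * s2 τ) * s1 τ, μ * s2 τ * s3 τ + 2 * s3 τ * (r2 τ - μ * s2 τ) + (μ * α ^ 2 * r2 τ - s2 τ) * r3 τ + α * r1 τ * (r2 τ - μ * s2 τ), (s1 τ - μ * α ^ 2 * r1 τ) * r3 τ - μ * α * s3 τ * r3 τ + (μ * s1 τ - 2 * r1 τ) * s3 τ - α * r1 τ * (r1 τ - μ * s1 τ), 2 * α * r3 τ * ((α * r1 τ + s3 τ) * s2 τ - α * s1 τ * r2 τ)) : ℝ × ℝ × ℝ × ℝ × ℝ)) τ) τ := by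
    intro τ hτ
    have hτI := hJI hτ
    have h1 := hs3 τ hτI
    have h2 : HasDerivAt r3 ((r1 τ - μ * s1 τ) * s2 τ - (r2 τ - μ * s2 τ) * s1 τ) τ := by
      have e : (r1 τ - μ * s1 τ) * s2 τ - (r2 τ - μ * s2 τ) * s1 τ = r1 τ * s2 τ - r2 τ * s1 τ := by ring
      rw [e]; exact hr3 τ hτI
    have h3 : HasDerivAt (fun x => r1 x - μ * s1 x) (μ * s2 τ * s3 τ + 2 * s3 τ * (r2 τ - μ * s2 τ) + (μ * α ^ 2 * r2 τ - s2 τ) * r3 τ + α * r1 τ * (r2 τ - μ * s2 τ)) τ := by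
      have h := (hr1 τ hτI).sub ((hs1 τ hτI).const_mul μ)
      refine h.congr_deriv ?_
      ring
    have h4 : HasDerivAt (fun x => r2 x - μ * s2 x) ((s1 τ - μ * α ^ 2 * r1 τ) * r3 τ - μ * α * s3 τ * r3 τ + (μ * s1 τ - 2 * r1 τ) * s3 τ - α * r1 τ * (r1 τ - μ * s1 τ)) τ := by
      have h := (hr2 τ hτI).sub ((hs2 τ hτI).const_mul μ)
      refine h.congr_deriv ?_
      ring
    have h5 : HasDerivAt (fun x => s1 x ^ 2 + s2 x ^ 2 - lam0 / lam3) (2 * α * r3 τ * ((α * r1 τ + s3 τ) * s2 τ - α * s1 τ * r2 τ)) τ := by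
      have h := (((hs1 τ hτI).pow 2).add ((hs2 τ hτI).pow 2)).sub_const (lam0 / lam3)
      refine h.congr_deriv ?_
      push_cast
      ring
    exact h1.prodMk (h2.prodMk (h3.prodMk (h4.prodMk h5)))
  have hb : ∀ τ ∈ uIcc t0 t, ‖(fun τ => ((-(α * r2 τ * s3 τ), (r1 τ - μ * s1 τ) * s2 τ - (r2 τ - μ * s2 τ) * s1 τ, μ * s2 τ * s3 τ + 2 * s3 τ * (r2 τ - μ * s2 τ) + (μ * α ^ 2 * r2 τ - s2 τ) * r3 τ + α * r1 τ * (r2 τ - μ * s2 τ), (s1 τ - μ * α ^ 2 * r1 τ) * r3 τ - μ * α * s3 τ * r3 τ + (μ * s1 τ - 2 * r1 τ) * s3 τ - α * r1 τ * (r1 τ - μ * s1 τ), 2 * α * r3 τ * ((α * r1 τ + s3 τ) * s2 τ - α * s1 τ * r2 τ)) : ℝ × ℝ × ℝ × ℝ × ℝ)) τ‖ ≤ K * ‖(fun τ => ((s3 τ, r3 τ, r1 τ - μ * s1 τ, r2 τ - μ * s2 τ, s1 τ ^ 2 + s2 τ ^ 2 - lam0 / lam3) : ℝ × ℝ × ℝ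 × ℝ × ℝ)) τ‖ := by
    intro τ hτ
    have hBs := hM τ hτ
    simp only [Real.norm_eq_abs] at hBs
    have hBs' : |s1 τ| + |s2 τ| + |r1 τ| + |r2 τ| + |s3 τ| + |r2 τ - μ * s2 τ| ≤ M :=
      (le_abs_self _).trans hBs
    have hMM : M ≤ |M| := le_abs_self M
    have a1 := abs_nonneg (s1 τ); have a2 := abs_nonneg (s2 τ); have a3 := abs_nonneg (r1 τ)
    have a4 := abs_nonneg (r2 τ); have a5 := abs_nonneg (s3 τ)
    have a6 := abs_nonneg (r2 τ - μ * s2 τ)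
    have bs1 : |s1 τ| ≤ |M| := by linarith
    have bs2 : |s2 τ| ≤ |M| := by linarith
    have br1 : |r1 τ| ≤ |M| := by linarith
    have br2 : |r2 τ| ≤ |M| := by linarith
    have bs3 : |s3 τ| ≤ |M| := by linarith
    have bu4 : |r2 τ - μ * s2 τ| ≤ |M| := by linarith
    obtain ⟨n1, n2, n3, n4, -⟩ := quint_comp_le (s3 τ) (r3 τ) (r1 τ - μ * s1 τ)
      (r2 τ - μ * s2 τ) (s1 τ ^ 2 + s2 τ ^ 2 - lam0 / lam3)
    set N := ‖((s3 τ, r3 τ, r1 τ - μ * s1 τ, r2 τ - μ * s2 τ, s1 τ ^ 2 + s2 τ ^ 2 - lam0 / lam3) : ℝ × ℝ × ℝ × ℝ × ℝ)‖ with hN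
    have hN0 : (0 : ℝ) ≤ N := norm_nonneg _
    have hAA : |α| ≤ |α| := le_refl _
    have hBB : |μ| ≤ |μ| := le_refl _
    have h2le : |(2 : ℝ)| ≤ 2 := by norm_num
    have hA2 : |α ^ 2| ≤ |α| ^ 2 := le_of_eq (abs_pow α 2)
    -- nonnegativity of the pieces of K
    have k1 : (0:ℝ) ≤ |α| * |M| := by positivity
    have k2 : (0:ℝ) ≤ |M| + |M| := by positivity
    have k3 : (0:ℝ) ≤ |μ| * |M| + 2 * |M| + (|μ| * |α| ^ 2 * |M| + |M|) + |α| * |M| := by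
      positivity
    have k4 : (0:ℝ) ≤ (|M| + |μ| * |α| ^ 2 * |M|) + |μ| * |α| * |M| + (|μ| * |M| + 2 * |M|)
        + |α| * |M| := by positivity
    have k5 : (0:ℝ) ≤ 2 * |α| * ((|α| * |M| + |M|) * |M| + |α| * |M| * |M|) := by positivity
    show ‖((-(α * r2 τ * s3 τ), (r1 τ - μ * s1 τ) * s2 τ - (r2 τ - μ * s2 τ) * s1 τ, μ * s2 τ * s3 τ + 2 * s3 τ * (r2 τ - μ * s2 τ) + (μ * α ^ 2 * r2 τ - s2 τ) * r3 τ + α * r1 τ * (r2 τ - μ * s2 τ), (s1 τ - μ * α ^ 2 * r1 τ) * r3 τ - μ * α * s3 τ * r3 τ + (μ * s1 τ - 2 * r1 τ) * s3 τ - α * r1 τ * (r1 τ - μ * s1 τ), 2 * α * r3 τ * ((α * r1 τ + s3 τ) * s2 τ - α * s1 τ * r2 τ)) : ℝ × ℝ × ℝ × ℝ × ℝ)‖ ≤ K * N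
    apply quint_norm_le
    · -- component 1
      have e1 : |-(α * r2 τ * s3 τ)| ≤ |α| * |M| * N := by
        rw [abs_neg]
        exact mul3_abs_le hAA br2 n1
      have e2 : |α| * |M| ≤ K := by rw [hK]; linarith
      have e3 := mul_le_mul_of_nonneg_right e2 hN0
      linarith
    · -- component 2
      have e1 : |(r1 τ - μ * s1 τ) * s2 τ - (r2 τ - μ * s2 τ) * s1 τ| ≤ N * |M| + N * |M| :=
        (abs_sub_le' _ _).trans (add_le_add (mul2_abs_le n3 bs2) (mul2_abs_le n4 bs1))
      have e2 : |M| + |M| ≤ K := by rw [hK]; linarith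
      have e3 := mul_le_mul_of_nonneg_right e2 hN0
      linarith
    · -- component 3
      have t1 : |μ * s2 τ * s3 τ| ≤ |μ| * |M| * N := mul3_abs_le hBB bs2 n1
      have t2 : |2 * s3 τ * (r2 τ - μ * s2 τ)| ≤ 2 * |M| * N := mul3_abs_le h2le bs3 n4
      have t3 : |(μ * α ^ 2 * r2 τ - s2 τ) * r3 τ| ≤ (|μ| * |α| ^ 2 * |M| + |M|) * N := by
        apply mul2_abs_le _ n2
        exact (abs_sub_le' _ _).trans (add_le_add (mul3_abs_le hBB hA2 br2) bs2)
      have t4 : |α * r1 τ * (r2 τ - μ * s2 τ)| ≤ |α| * |M| * N := mul3_abs_le hAA br1 n4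
      have e1 : |μ * s2 τ * s3 τ + 2 * s3 τ * (r2 τ - μ * s2 τ) + (μ * α ^ 2 * r2 τ - s2 τ) * r3 τ + α * r1 τ * (r2 τ - μ * s2 τ)| ≤ |μ| * |M| * N + 2 * |M| * N + (|μ| * |α| ^ 2 * |M| + |M|) * N
          + |α| * |M| * N := by
        calc |μ * s2 τ * s3 τ + 2 * s3 τ * (r2 τ - μ * s2 τ) + (μ * α ^ 2 * r2 τ - s2 τ) * r3 τ + α * r1 τ * (r2 τ - μ * s2 τ)|
            ≤ |μ * s2 τ * s3 τ + 2 * s3 τ * (r2 τ - μ * s2 τ)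
                + (μ * α ^ 2 * r2 τ - s2 τ) * r3 τ| + |α * r1 τ * (r2 τ - μ * s2 τ)| :=
              abs_add_le _ _
          _ ≤ |μ * s2 τ * s3 τ + 2 * s3 τ * (r2 τ - μ * s2 τ)|
                + |(μ * α ^ 2 * r2 τ - s2 τ) * r3 τ| + |α * r1 τ * (r2 τ - μ * s2 τ)| := by
              have := abs_add_le (μ * s2 τ * s3 τ + 2 * s3 τ * (r2 τ - μ * s2 τ))
                ((μ * α ^ 2 * r2 τ - s2 τ) * r3 τ)
              linarith
          _ ≤ |μ * s2 τ * s3 τ| + |2 * s3 τ * (r2 τ - μ * s2 τ)|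
                + |(μ * α ^ 2 * r2 τ - s2 τ) * r3 τ| + |α * r1 τ * (r2 τ - μ * s2 τ)| := by
              have := abs_add_le (μ * s2 τ * s3 τ) (2 * s3 τ * (r2 τ - μ * s2 τ))
              linarith
          _ ≤ _ := by linarith
      have e2 : |μ| * |M| + 2 * |M| + (|μ| * |α| ^ 2 * |M| + |M|) + |α| * |M| ≤ K := by
        rw [hK]; linarith
      have e3 := mul_le_mul_of_nonneg_right e2 hN0
      linarith
    · -- component 4
      have t1 : |(s1 τ - μ * α ^ 2 * r1 τ) * r3 τ| ≤ (|M| + |μ| * |α| ^ 2 * |M|) * N := by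
        apply mul2_abs_le _ n2
        exact (abs_sub_le' _ _).trans (add_le_add bs1 (mul3_abs_le hBB hA2 br1))
      have t2 : |μ * α * s3 τ * r3 τ| ≤ |μ| * |α| * |M| * N :=
        mul2_abs_le (mul3_abs_le hBB hAA bs3) n2
      have t3 : |(μ * s1 τ - 2 * r1 τ) * s3 τ| ≤ (|μ| * |M| + 2 * |M|) * N := by
        apply mul2_abs_le _ n1
        exact (abs_sub_le' _ _).trans (add_le_add (mul2_abs_le hBB bs1) (mul2_abs_le h2le br1))
      have t4 : |α * r1 τ * (r1 τ - μ * s1 τ)| ≤ |α| * |M| * N := mul3_abs_le hAA br1 n3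
      have e1 : |(s1 τ - μ * α ^ 2 * r1 τ) * r3 τ - μ * α * s3 τ * r3 τ + (μ * s1 τ - 2 * r1 τ) * s3 τ - α * r1 τ * (r1 τ - μ * s1 τ)| ≤ (|M| + |μ| * |α| ^ 2 * |M|) * N + |μ| * |α| * |M| * N
          + (|μ| * |M| + 2 * |M|) * N + |α| * |M| * N := by
        calc |(s1 τ - μ * α ^ 2 * r1 τ) * r3 τ - μ * α * s3 τ * r3 τ + (μ * s1 τ - 2 * r1 τ) * s3 τ - α * r1 τ * (r1 τ - μ * s1 τ)|
            ≤ |(s1 τ - μ * α ^ 2 * r1 τ) * r3 τ - μ * α * s3 τ * r3 τ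
                + (μ * s1 τ - 2 * r1 τ) * s3 τ| + |α * r1 τ * (r1 τ - μ * s1 τ)| :=
              abs_sub_le' _ _
          _ ≤ |(s1 τ - μ * α ^ 2 * r1 τ) * r3 τ - μ * α * s3 τ * r3 τ|
                + |(μ * s1 τ - 2 * r1 τ) * s3 τ| + |α * r1 τ * (r1 τ - μ * s1 τ)| := by
              have := abs_add_le ((s1 τ - μ * α ^ 2 * r1 τ) * r3 τ - μ * α * s3 τ * r3 τ)
                ((μ * s1 τ - 2 * r1 τ) * s3 τ)
              linarith
          _ ≤ |(s1 τ - μ * α ^ 2 * r1 τ) * r3 τ| + |μ * α * s3 τ * r3 τ|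
                + |(μ * s1 τ - 2 * r1 τ) * s3 τ| + |α * r1 τ * (r1 τ - μ * s1 τ)| := by
              have := abs_sub_le' ((s1 τ - μ * α ^ 2 * r1 τ) * r3 τ) (μ * α * s3 τ * r3 τ)
              linarith
          _ ≤ _ := by linarith
      have e2 : (|M| + |μ| * |α| ^ 2 * |M|) + |μ| * |α| * |M| + (|μ| * |M| + 2 * |M|)
          + |α| * |M| ≤ K := by rw [hK]; linarith
      have e3 := mul_le_mul_of_nonneg_right e2 hN0
      linarith
    · -- component 5
      have hinner : |(α * r1 τ + s3 τ) * s2 τ - α * s1 τ * r2 τ|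
          ≤ (|α| * |M| + |M|) * |M| + |α| * |M| * |M| := by
        apply (abs_sub_le' _ _).trans
        apply add_le_add _ (mul3_abs_le hAA bs1 br2)
        apply mul2_abs_le _ bs2
        exact (abs_add_le _ _).trans (add_le_add (mul2_abs_le hAA br1) bs3)
      have e1 : |2 * α * r3 τ * ((α * r1 τ + s3 τ) * s2 τ - α * s1 τ * r2 τ)| ≤ 2 * |α| * N * ((|α| * |M| + |M|) * |M| + |α| * |M| * |M|) :=
        mul2_abs_le (mul3_abs_le h2le hAA n2) hinner
      have e2 : 2 * |α| * ((|α| * |M| + |M|) * |M| + |α| * |M| * |M|) ≤ K := by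
        rw [hK]; linarith
      have e3 := mul_le_mul_of_nonneg_right e2 hN0
      linarith
  have hW0 : (fun τ => ((s3 τ, r3 τ, r1 τ - μ * s1 τ, r2 τ - μ * s2 τ, s1 τ ^ 2 + s2 τ ^ 2 - lam0 / lam3) : ℝ × ℝ × ℝ × ℝ × ℝ)) t0 = 0 := by
    simp only [hm1, hm2, hm3, hm4, hm5, Prod.ext_iff]
    norm_num
  have hzero : (fun τ => ((s3 τ, r3 τ, r1 τ - μ * s1 τ, r2 τ - μ * s2 τ, s1 τ ^ 2 + s2 τ ^ 2 - lam0 / lam3) : ℝ × ℝ × ℝ × ℝ × ℝ)) t = 0 := by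
    rcases le_total t0 t with hle | hle
    · refine gron_zero_right (K := K)
        (fun τ hτ => hd τ (by rwa [uIcc_of_le hle]))
        (fun τ hτ => hb τ (by rwa [uIcc_of_le hle])) hW0 t (right_mem_Icc.mpr hle)
    · refine gron_zero_left (K := K)
        (fun τ hτ => hd τ (by rwa [uIcc_of_ge hle]))
        (fun τ hτ => hb τ (by rwa [uIcc_of_ge hle])) hW0 t (left_mem_Icc.mpr hle)
  have hz : s3 t = 0 ∧ r3 t = 0 ∧ r1 t - μ * s1 t = 0 ∧ r2 t - μ * s2 t = 0 ∧
      s1 t ^ 2 + s2 t ^ 2 - lam0 / lam3 = 0 := by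
    simpa [Prod.ext_iff] using hzero
  exact ⟨hz.1, hz.2.1, sub_eq_zero.mp hz.2.2.1, sub_eq_zero.mp hz.2.2.2.1,
    sub_eq_zero.mp hz.2.2.2.2⟩
end

section
/- Let α, λ0, λ1, λ3 be real numbers with α ≠ 0, λ0 ≠ 0, λ3 ≠ 0 and λ0/λ3 > 0, and set μ = 2λ0/(λ1 + √(4α²λ0² + λ1²)). If t ↦ (s(t), r(t)) is a solution of the transformed system taking values in the invariant set M₁ = {s3 = 0, r3 = 0, r1 = μ s1, r2 = μ s2, s1² + s2² = λ0/λ3}, then its s2-component satisfies the scalar differential equation ṡ2 = −2αλ0(λ0 − λ3 s2²)/((λ1 + √(4α²λ0² + λ1²)) λ3). -/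
/-- On the invariant set M₁ = {s3 = 0, r3 = 0, r1 = μ s1, r2 = μ s2,
s1² + s2² = λ0/λ3}, μ = 2λ0/(λ1 + √(4α²λ0² + λ1²)), the s2-component of every
solution of the transformed system satisfies the scalar differential equation
ṡ2 = −2αλ0(λ0 − λ3 s2²)/((λ1 + √(4α²λ0² + λ1²)) λ3). -/
theorem reduced_equation_on_M1 (α lam0 lam1 lam3 : ℝ)
    (hα : α ≠ 0) (h0 : lam0 ≠ 0) (h3 : lam3 ≠ 0) (hpos : 0 < lam0 / lam3)
    (μ : ℝ) (hμ : μ = 2 * lam0 / (lam1 + Real.sqrt (4 * α ^ 2 * lam0 ^ 2 + lam1 ^ 2)))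
    (s1 s2 s3 r1 r2 r3 : ℝ → ℝ)
    (hs1 : ∀ t : ℝ, HasDerivAt s1 ((α * r1 t + s3 t) * s2 t - α ^ 2 * r2 t * r3 t) t)
    (hs2 : ∀ t : ℝ, HasDerivAt s2 ((α * r3 t - s1 t) * (α * r1 t + s3 t)) t)
    (hs3 : ∀ t : ℝ, HasDerivAt s3 (-(α * r2 t * s3 t)) t)
    (hr1 : ∀ t : ℝ, HasDerivAt r1 ((α * r1 t + 2 * s3 t) * r2 t - r3 t * s2 t) t)
    (hr2 : ∀ t : ℝ, HasDerivAt r2 (r3 t * s1 t - r1 t * (α * r1 t + 2 * s3 t)) t)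
    (hr3 : ∀ t : ℝ, HasDerivAt r3 (r1 t * s2 t - r2 t * s1 t) t)
    (hmem : ∀ t : ℝ, s3 t = 0 ∧ r3 t = 0 ∧ r1 t = μ * s1 t ∧ r2 t = μ * s2 t ∧
      s1 t ^ 2 + s2 t ^ 2 = lam0 / lam3) :
    ∀ t : ℝ, HasDerivAt s2
      (-(2 * α * lam0 * (lam0 - lam3 * s2 t ^ 2)) /
        ((lam1 + Real.sqrt (4 * α ^ 2 * lam0 ^ 2 + lam1 ^ 2)) * lam3)) t := by
  intro t
  obtain ⟨h3', hr3', hr1', hr2', hsum⟩ := hmem t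
  have hD : 0 < lam1 + Real.sqrt (4 * α ^ 2 * lam0 ^ 2 + lam1 ^ 2) := by
    have h1 : |lam1| < Real.sqrt (4 * α ^ 2 * lam0 ^ 2 + lam1 ^ 2) := by
      rw [← Real.sqrt_sq_eq_abs]
      apply Real.sqrt_lt_sqrt (sq_nonneg _)
      have h4 : 0 < 4 * α ^ 2 * lam0 ^ 2 := by positivity
      linarith
    linarith [neg_abs_le lam1]
  set S := Real.sqrt (4 * α ^ 2 * lam0 ^ 2 + lam1 ^ 2)
  have hDne : lam1 + S ≠ 0 := ne_of_gt hD
  have key : (α * r3 t - s1 t) * (α * r1 t + s3 t)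
      = -(2 * α * lam0 * (lam0 - lam3 * s2 t ^ 2)) / ((lam1 + S) * lam3) := by
    rw [hr3', hr1', h3', hμ]
    have hs1sq : s1 t ^ 2 = lam0 / lam3 - s2 t ^ 2 := by linarith
    have hsum2 : lam0 = (s1 t ^ 2 + s2 t ^ 2) * lam3 := (div_eq_iff h3).mp hsum.symm
    field_simp
    linear_combination (2 * α * lam0) * hsum2
  rw [← key]
  exact hs2 t
end

section
/- Let α > 0, λ0 > 0, λ3 > 0, and λ1 ∈ ℝ. For the scalar differential equation ṡ2 = −2αλ0(λ0 − λ3 s2²)/((λ1 + √(4α²λ0² + λ1²)) λ3) (the reduced equation on the invariant manifold M₁), the point s2⁰ = −√(λ0/λ3) is an equilibrium, and it is asymptotically stable: it is Lyapunov stable and there is a neighborhood of s2⁰ such that every solution starting in it converges to s2⁰ as t → +∞. -/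
open Filter Set



/-- Barrier lemma: if `g' ≤ 0` whenever `g ≤ B`, `g 0 < b ≤ B`, then `g` stays below `b`. -/
lemma barrier_invariance {g g' : ℝ → ℝ}
    (hg : ∀ t : ℝ, 0 ≤ t → HasDerivAt g (g' t) t)
    {b B : ℝ} (hbB : b ≤ B)
    (hder : ∀ t : ℝ, 0 ≤ t → g t ≤ B → g' t ≤ 0)
    (h0 : g 0 < b) : ∀ t : ℝ, 0 ≤ t → g t < b := by
  by_contra h
  push_neg at h
  obtain ⟨t, ht0, htb⟩ := h
  set S : Set ℝ := {t : ℝ | 0 ≤ t ∧ b ≤ g t} with hS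
  have hcont : ContinuousOn g (Ici 0) := fun s hs =>
    ((hg s hs).continuousAt).continuousWithinAt
  have hSclosed : IsClosed S := by
    have : S = Ici 0 ∩ g ⁻¹' Ici b := by
      ext s; simp [hS, Set.mem_setOf_eq]
    rw [this]
    exact ContinuousOn.preimage_isClosed_of_isClosed hcont isClosed_Ici isClosed_Ici
  have hSne : S.Nonempty := ⟨t, ht0, htb⟩
  have hSbdd : BddBelow S := ⟨0, fun x hx => hx.1⟩
  set t1 := sInf S with ht1def
  have ht1S : t1 ∈ S := hSclosed.csInf_mem hSne hSbdd
  have ht1pos : 0 < t1 := by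
    rcases lt_or_eq_of_le ht1S.1 with h' | h'
    · exact h'
    · exfalso; rw [← h'] at ht1S; exact absurd ht1S.2 (not_le.mpr h0)
  have hlt : ∀ s : ℝ, 0 ≤ s → s < t1 → g s < b := by
    intro s hs0 hst
    by_contra hc
    exact absurd (csInf_le hSbdd ⟨hs0, not_lt.mp hc⟩) (not_le.mpr hst)
  have hanti : AntitoneOn g (Icc 0 t1) := by
    apply antitoneOn_of_deriv_nonpos (convex_Icc 0 t1)
      (hcont.mono (Icc_subset_Ici_self))
    · intro x hx
      rw [interior_Icc] at hx
      exact ((hg x hx.1.le).differentiableAt).differentiableWithinAt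
    · intro x hx
      rw [interior_Icc] at hx
      rw [(hg x hx.1.le).deriv]
      exact hder x hx.1.le (le_trans (hlt x hx.1.le hx.2).le hbB)
  have : g t1 ≤ g 0 := hanti ⟨le_refl 0, ht1pos.le⟩ ⟨ht1pos.le, le_refl t1⟩ ht1pos.le
  linarith [ht1S.2]

/-- Exponential decay: if `g' ≤ -k g` for `t ≥ 0`, then `g t * exp (k t) ≤ g 0`. -/
lemma exp_decay {g g' : ℝ → ℝ}
    (hg : ∀ t : ℝ, 0 ≤ t → HasDerivAt g (g' t) t)
    {k : ℝ}
    (hder : ∀ t : ℝ, 0 ≤ t → g' t ≤ -k * g t) :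
    ∀ t : ℝ, 0 ≤ t → g t * Real.exp (k * t) ≤ g 0 := by
  set h : ℝ → ℝ := fun t => g t * Real.exp (k * t) with hh
  have hd : ∀ t : ℝ, 0 ≤ t →
      HasDerivAt h (g' t * Real.exp (k * t) + g t * (Real.exp (k * t) * k)) t := by
    intro t ht
    have := (hg t ht).mul (((hasDerivAt_id t).const_mul k).exp)
    simp only [id_eq, mul_one] at this
    exact this
  have hanti : AntitoneOn h (Ici 0) := by
    apply antitoneOn_of_deriv_nonpos (convex_Ici 0)
      (fun s hs => ((hd s hs).continuousAt).continuousWithinAt)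
    · intro x hx
      rw [interior_Ici] at hx
      exact ((hd x hx.le).differentiableAt).differentiableWithinAt
    · intro x hx
      rw [interior_Ici] at hx
      rw [(hd x hx.le).deriv]
      have h1 := hder x hx.le
      have h2 := Real.exp_pos (k * x)
      nlinarith
  intro t ht
  have := hanti (self_mem_Ici) ht ht
  simpa [hh] using this


/-- For α > 0, λ0 > 0, λ3 > 0, the point s2⁰ = −√(λ0/λ3) is an equilibrium of the
reduced scalar equation ṡ2 = −2αλ0(λ0 − λ3 s2²)/((λ1 + √(4α²λ0² + λ1²)) λ3) on the
invariant manifold M₁, and it is asymptotically stable: it is Lyapunov stable and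
there is a neighborhood of s2⁰ from which every solution converges to s2⁰ as
t → +∞. -/
theorem reduced_equilibrium_asymptotically_stable (α lam0 lam1 lam3 : ℝ)
    (hα : 0 < α) (h0 : 0 < lam0) (h3 : 0 < lam3) :
    let f : ℝ → ℝ := fun z =>
      -(2 * α * lam0 * (lam0 - lam3 * z ^ 2)) /
        ((lam1 + Real.sqrt (4 * α ^ 2 * lam0 ^ 2 + lam1 ^ 2)) * lam3)
    let z0 : ℝ := -Real.sqrt (lam0 / lam3)
    f z0 = 0 ∧
    (∀ ε > (0 : ℝ), ∃ δ > (0 : ℝ), ∀ z : ℝ → ℝ,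
      (∀ t : ℝ, 0 ≤ t → HasDerivAt z (f (z t)) t) →
      |z 0 - z0| < δ → ∀ t : ℝ, 0 ≤ t → |z t - z0| < ε) ∧
    (∃ δ > (0 : ℝ), ∀ z : ℝ → ℝ,
      (∀ t : ℝ, 0 ≤ t → HasDerivAt z (f (z t)) t) →
      |z 0 - z0| < δ → Tendsto z atTop (nhds z0)) := by
  intro f z0
  -- basic constants
  set a : ℝ := Real.sqrt (lam0 / lam3) with ha_def
  have ha : 0 < a := Real.sqrt_pos.mpr (div_pos h0 h3)
  have hl0 : lam3 * a ^ 2 = lam0 := by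
    have ha2 : a ^ 2 = lam0 / lam3 := Real.sq_sqrt (div_pos h0 h3).le
    rw [ha2]; field_simp
  have hz0 : z0 = -a := rfl
  set S : ℝ := Real.sqrt (4 * α ^ 2 * lam0 ^ 2 + lam1 ^ 2) with hS_def
  have hSpos : |lam1| < S := by
    rw [hS_def, ← Real.sqrt_sq_eq_abs]
    apply Real.sqrt_lt_sqrt (sq_nonneg lam1)
    have : 0 < 4 * α ^ 2 * lam0 ^ 2 := by positivity
    linarith
  have hD : 0 < (lam1 + S) * lam3 := by
    have h1 : -lam1 ≤ |lam1| := neg_le_abs lam1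
    have h2 : 0 < lam1 + S := by linarith
    positivity
  set D : ℝ := (lam1 + S) * lam3 with hD_def
  set C : ℝ := 2 * α * lam0 * lam3 / D with hC_def
  have hC : 0 < C := by positivity
  -- structure of f
  have hkey : ∀ w : ℝ, f w = C * ((w - a) * (w + a)) := by
    intro w
    show -(2 * α * lam0 * (lam0 - lam3 * w ^ 2)) / D = C * ((w - a) * (w + a))
    rw [hC_def, div_mul_eq_mul_div]
    congr 1
    linear_combination (2 * α * lam0) * hl0
  set k : ℝ := C * a with hk_def
  have hk : 0 < k := mul_pos hC ha
  -- make everything opaque so arithmetic tactics stay fast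
  clear_value f z0 a S D C k
  clear ha_def hS_def hD_def hC_def hSpos hD
  -- equilibrium
  have heq : f z0 = 0 := by rw [hkey, hz0]; ring
  refine ⟨heq, ?_, ?_⟩
  · -- Lyapunov stability
    intro ε hε
    refine ⟨min ε a, lt_min hε ha, ?_⟩
    intro z hz hz0close t ht
    set g : ℝ → ℝ := fun t => (z t - z0) ^ 2 with hg_def
    set g' : ℝ → ℝ := fun t => 2 * (z t - z0) * f (z t) with hg'_def
    have hg : ∀ s : ℝ, 0 ≤ s → HasDerivAt g (g' s) s := by
      intro s hs
      have h1 := ((hz s hs).sub_const z0).pow 2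
      have h2 : (2 : ℕ) * (z s - z0) ^ (2 - 1) * f (z s) = g' s := by
        rw [hg'_def]; push_cast; ring
      rw [h2] at h1
      exact h1
    have hder : ∀ s : ℝ, 0 ≤ s → g s ≤ a ^ 2 → g' s ≤ 0 := by
      intro s hs hgs
      have hzs : z s - z0 = z s + a := by rw [hz0]; ring
      have hga : (z s + a) ^ 2 ≤ a ^ 2 := by
        rw [← hzs]; exact hgs
      have hu : z s ≤ 0 := by nlinarith
      show 2 * (z s - z0) * f (z s) ≤ 0
      rw [hkey, hzs]
      nlinarith [mul_nonneg (mul_nonneg hC.le (sq_nonneg (z s + a))) (neg_nonneg.mpr hu)]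
    have hb0 : 0 < min ε a := lt_min hε ha
    have hbB : (min ε a) ^ 2 ≤ a ^ 2 := by
      have h1 : min ε a ≤ a := min_le_right ε a
      nlinarith
    have hg0 : g 0 < (min ε a) ^ 2 := by
      show (z 0 - z0) ^ 2 < (min ε a) ^ 2
      nlinarith [sq_abs (z 0 - z0), abs_nonneg (z 0 - z0)]
    have hinv := barrier_invariance hg hbB hder hg0 t ht
    have habs : |z t - z0| < min ε a := by
      have h2 : |z t - z0| ^ 2 < (min ε a) ^ 2 := by
        rw [sq_abs]; exact hinv
      nlinarith [abs_nonneg (z t - z0)]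
    exact habs.trans_le (min_le_left ε a)
  · -- attraction
    refine ⟨a, ha, ?_⟩
    intro z hz hz0close
    set g : ℝ → ℝ := fun t => (z t - z0) ^ 2 with hg_def
    set g' : ℝ → ℝ := fun t => 2 * (z t - z0) * f (z t) with hg'_def
    have hg : ∀ s : ℝ, 0 ≤ s → HasDerivAt g (g' s) s := by
      intro s hs
      have h1 := ((hz s hs).sub_const z0).pow 2
      have h2 : (2 : ℕ) * (z s - z0) ^ (2 - 1) * f (z s) = g' s := by
        rw [hg'_def]; push_cast; ring
      rw [h2] at h1
      exact h1
    have hder : ∀ s : ℝ, 0 ≤ s → g s ≤ a ^ 2 → g' s ≤ -(2 * k) * g s := by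
      intro s hs hgs
      have hzs : z s - z0 = z s + a := by rw [hz0]; ring
      have hga : (z s + a) ^ 2 ≤ a ^ 2 := by
        rw [← hzs]; exact hgs
      have hu : z s ≤ 0 := by nlinarith
      show 2 * (z s - z0) * f (z s) ≤ -(2 * k) * (z s - z0) ^ 2
      rw [hkey, hzs, hk_def]
      nlinarith [mul_nonneg (mul_nonneg hC.le (sq_nonneg (z s + a))) (neg_nonneg.mpr hu)]
    have hg0 : g 0 < a ^ 2 := by
      show (z 0 - z0) ^ 2 < a ^ 2
      nlinarith [sq_abs (z 0 - z0), abs_nonneg (z 0 - z0)]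
    have hinv : ∀ t : ℝ, 0 ≤ t → g t < a ^ 2 :=
      barrier_invariance hg (le_refl _)
        (fun s hs hgs => (hder s hs hgs).trans
          (by have hgnn : (0:ℝ) ≤ g s := sq_nonneg (z s - z0)
              nlinarith)) hg0
    have hdecay : ∀ t : ℝ, 0 ≤ t → g t * Real.exp ((2 * k) * t) ≤ g 0 :=
      exp_decay hg (fun s hs => hder s hs (hinv s hs).le)
    -- squeeze: 0 ≤ g t ≤ g 0 * exp (-(2k) t) → 0
    have hgt0 : Tendsto g atTop (nhds 0) := by
      apply squeeze_zero' (g := fun t => g 0 * (Real.exp ((2 * k) * t))⁻¹)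
        (Eventually.of_forall (fun t => sq_nonneg _))
      · filter_upwards [eventually_ge_atTop (0 : ℝ)] with t ht
        have h1 := hdecay t ht
        have h2 := Real.exp_pos ((2 * k) * t)
        rw [← div_eq_mul_inv, le_div_iff₀ h2]
        exact h1
      · have h1 : Tendsto (fun t : ℝ => (2 * k) * t) atTop atTop :=
          Tendsto.const_mul_atTop (by linarith) tendsto_id
        have h2 : Tendsto (fun t : ℝ => (Real.exp ((2 * k) * t))⁻¹) atTop (nhds 0) :=
          (Real.tendsto_exp_atTop.comp h1).inv_tendsto_atTop
        simpa using h2.const_mul (g 0)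
    have habs : Tendsto (fun t => |z t - z0|) atTop (nhds 0) := by
      have h1 := (Real.continuous_sqrt.tendsto 0).comp hgt0
      simp only [Real.sqrt_zero] at h1
      have h2 : (fun t => Real.sqrt (g t)) = fun t => |z t - z0| := by
        funext t
        show Real.sqrt ((z t - z0) ^ 2) = _
        exact Real.sqrt_sq_eq_abs _
      rw [← h2]
      exact h1
    have hw : Tendsto (fun t => z t - z0) atTop (nhds 0) := by
      apply tendsto_of_tendsto_of_tendsto_of_le_of_le
        (f := fun t => z t - z0) (g := fun t => -|z t - z0|) (h := fun t => |z t - z0|)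
        (by simpa using habs.neg) habs
        (fun t => neg_abs_le _) (fun t => le_abs_self _)
    have := hw.add_const z0
    simpa using this
end
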